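/- Let K ⊆ P be proper graded ideals of a G-graded ring R. If K is a graded weakly 2-absorbing ideal of R and P/K is a graded weakly 2-absorbing ideal of R/K, then P is a graded weakly 2-absorbing ideal of R. -/
import Mathlib


variable {G R : Type*} [AddGroup G] [DecidableEq G] [Ring R]

/-- `x` is a homogeneous element of the `G`-graded ring `R`. -/
def IsHomog (𝒜 : G → AddSubgroup R) (x : R) : Prop := ∃ g, x ∈ 𝒜 g

/-- A two-sided ideal is graded if it contains all homogeneous components of its elements. -/
def IsGradedIdeal (𝒜 : G → AddSubgroup R) [GradedRing 𝒜] (P : TwoSidedIdeal R) : Prop :=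
  ∀ a ∈ P, ∀ g : G, (DirectSum.decompose 𝒜 a g : R) ∈ P

/-- Graded weakly prime: a proper graded ideal `P` such that `0 ≠ IJ ⊆ P` for graded
ideals `I, J` implies `I ⊆ P` or `J ⊆ P`. -/
def IsGradedWeaklyPrime (𝒜 : G → AddSubgroup R) [GradedRing 𝒜] (P : TwoSidedIdeal R) : Prop :=
  P ≠ ⊤ ∧ IsGradedIdeal 𝒜 P ∧
    ∀ I J : TwoSidedIdeal R, IsGradedIdeal 𝒜 I → IsGradedIdeal 𝒜 J →
      (∃ a ∈ I, ∃ b ∈ J, a * b ≠ 0) → (∀ a ∈ I, ∀ b ∈ J, a * b ∈ P) →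
      I ≤ P ∨ J ≤ P

/-- Graded weakly 2-absorbing: a proper graded ideal `P` such that for homogeneous `x, y, z`,
`0 ≠ xRyRz ⊆ P` implies `xy ∈ P` or `yz ∈ P` or `xz ∈ P`. -/
def IsGradedWeakly2Absorbing (𝒜 : G → AddSubgroup R) [GradedRing 𝒜] (P : TwoSidedIdeal R) : Prop :=
  P ≠ ⊤ ∧ IsGradedIdeal 𝒜 P ∧
    ∀ x y z : R, IsHomog 𝒜 x → IsHomog 𝒜 y → IsHomog 𝒜 z →
      (∃ r s : R, x * r * y * s * z ≠ 0) → (∀ r s : R, x * r * y * s * z ∈ P) →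
      x * y ∈ P ∨ y * z ∈ P ∨ x * z ∈ P

/-- If `K ⊆ P` are proper graded ideals, `K` is graded weakly 2-absorbing and `P/K` is a
graded weakly 2-absorbing ideal of `R/K`, then `P` is a graded weakly 2-absorbing ideal of `R`. -/
theorem stmt6 (𝒜 : G → AddSubgroup R) [GradedRing 𝒜] (P K : TwoSidedIdeal R)
    (hKP : K ≤ P) (hPproper : P ≠ ⊤) (hPgr : IsGradedIdeal 𝒜 P)
    (hK : IsGradedWeakly2Absorbing 𝒜 K)
    (ℬ : G → AddSubgroup K.ringCon.Quotient)
    (hℬ : ∀ g, ℬ g = (𝒜 g).map (RingCon.mk' K.ringCon).toAddMonoidHom)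
    [GradedRing ℬ]
    (Q : TwoSidedIdeal K.ringCon.Quotient)
    (hQ : ∀ q, q ∈ Q ↔ ∃ p ∈ P, RingCon.mk' K.ringCon p = q)
    (hQw : IsGradedWeakly2Absorbing ℬ Q) :
    IsGradedWeakly2Absorbing 𝒜 P := by
  refine ⟨hPproper, hPgr, ?_⟩
  rintro x y z hx hy hz ⟨r, s, hne⟩ hall
  by_cases hcase : ∀ r s : R, x * r * y * s * z ∈ K
  · rcases hK.2.2 x y z hx hy hz ⟨r, s, hne⟩ hcase with h|h|h
    exacts [Or.inl (hKP h), Or.inr (Or.inl (hKP h)), Or.inr (Or.inr (hKP h))]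
  · push_neg at hcase
    obtain ⟨r0, s0, hr0⟩ := hcase
    set f := RingCon.mk' K.ringCon with hf
    have hfeq : ∀ a b : R, f a = f b ↔ a - b ∈ K := fun a b =>
      (RingCon.eq K.ringCon).trans (K.rel_iff a b)
    have hf0 : ∀ a : R, f a = 0 ↔ a ∈ K := by
      intro a
      have : (0 : K.ringCon.Quotient) = f 0 := (map_zero f).symm
      rw [this, hfeq]; simp
    have hsurj : ∀ q : K.ringCon.Quotient, ∃ a : R, f a = q := fun q =>
      Quotient.inductionOn' q (fun a => ⟨a, rfl⟩)
    have hhom : ∀ w : R, IsHomog 𝒜 w → IsHomog ℬ (f w) := by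
      rintro w ⟨g, hg⟩
      exact ⟨g, by rw [hℬ]; exact ⟨w, hg, rfl⟩⟩
    have hex : ∃ r s : K.ringCon.Quotient, f x * r * f y * s * f z ≠ 0 := by
      refine ⟨f r0, f s0, ?_⟩
      have : f x * f r0 * f y * f s0 * f z = f (x * r0 * y * s0 * z) := by
        simp [map_mul]
      rw [this]; exact fun h => hr0 ((hf0 _).1 h)
    have hallQ : ∀ r s : K.ringCon.Quotient, f x * r * f y * s * f z ∈ Q := by
      intro r s
      obtain ⟨a, ha⟩ := hsurj r
      obtain ⟨b, hb⟩ := hsurj s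
      rw [← ha, ← hb]
      have : f x * f a * f y * f b * f z = f (x * a * y * b * z) := by
        simp [map_mul]
      rw [this, hQ]
      exact ⟨x * a * y * b * z, hall a b, rfl⟩
    have key : ∀ a : R, f a ∈ Q → a ∈ P := by
      intro a ha
      obtain ⟨p, hp, hpa⟩ := (hQ (f a)).1 ha
      have := (hfeq p a).1 hpa
      rw [← sub_sub_cancel p a]; exact P.sub_mem hp (hKP ‹p - a ∈ K›)
    rcases hQw.2.2 (f x) (f y) (f z) (hhom x hx) (hhom y hy) (hhom z hz) hex hallQ
      with h|h|h
    · exact Or.inl (key _ (by rw [map_mul]; exact h))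
    · exact Or.inr (Or.inl (key _ (by rw [map_mul]; exact h)))
    · exact Or.inr (Or.inr (key _ (by rw [map_mul]; exact h)))
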